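/- arXiv:1111.4578 — 3 statements merged into one kernel-verified Lean document; each statement's English description precedes it below -/
import Mathlib

section
/- Let 0 < β < π and ξ₂ ∈ [π−β, π+β]. Then for every m ∈ 2πℕ₀ (i.e. m = 2πn for some natural number n ≥ 0), the minimum over m₂ ∈ 2πℤ of |(m₂ + ξ₂)² − (m + 2π)²| is at least (2m + 3π + β)(π − β). -/
/-!
With `c = π - β`, every point of `2πℤ + ξ₂` has absolute value at least `c`. The difference
`(m₂ + ξ₂)² - (m + 2π)²` factors as `P * Q` with `P, Q ∈ 2πℤ + ξ₂` and `|P - Q| = 2m + 4π`, and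
`(|P| - c) (|Q| - c) ≥ 0` together with `|P| + |Q| ≥ |P - Q|` gives `|P Q| ≥ c (2m + 4π - c)`.
-/

open Real

theorem mul_abs_sub_sub_le_abs_mul {a b c : ℝ} (ha : c ≤ |a|) (hb : c ≤ |b|) :
    c * (|a - b| - c) ≤ |a * b| := by
  rcases le_total c 0 with hc | hc
  · exact (mul_nonpos_of_nonpos_of_nonneg hc (by linarith [abs_nonneg (a - b)])).trans
      (abs_nonneg _)
  · calc c * (|a - b| - c) ≤ c * (|a| + |b| - c) := by gcongr; exact abs_sub _ _
      _ ≤ |a| * |b| := by nlinarith [mul_nonneg (sub_nonneg.2 ha) (sub_nonneg.2 hb)]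
      _ = |a * b| := (abs_mul a b).symm

theorem sub_le_abs_two_pi_mul_int_add {β ξ : ℝ} (hξ : ξ ∈ Set.Icc (π - β) (π + β)) (k : ℤ) :
    π - β ≤ |2 * π * k + ξ| := by
  obtain ⟨hξ₁, hξ₂⟩ := hξ
  rcases le_or_gt 0 k with hk | hk
  · have hk' : (0 : ℝ) ≤ k := by exact_mod_cast hk
    exact le_abs.2 (Or.inl (by nlinarith [pi_pos]))
  · have hk' : (k : ℝ) ≤ -1 := by exact_mod_cast Int.le_sub_one_of_lt hk
    exact le_abs.2 (Or.inr (by nlinarith [pi_pos]))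

theorem min_estimate_general (β ξ₂ : ℝ)
    (hξ : ξ₂ ∈ Set.Icc (π - β) (π + β)) (n : ℕ) (m : ℝ) (hm : m = 2 * π * n) :
    ∀ j : ℤ, (2 * m + 3 * π + β) * (π - β) ≤ |(2 * π * j + ξ₂)^2 - (m + 2 * π)^2| := by
  intro j
  subst hm
  set P := 2 * π * ((j - (n + 1) : ℤ) : ℝ) + ξ₂
  set Q := 2 * π * ((j + (n + 1) : ℤ) : ℝ) + ξ₂
  have hPQ : |P - Q| = 2 * (2 * π * n) + 4 * π := by
    rw [abs_sub_comm, abs_of_nonneg (by push_cast [P, Q]; ring_nf; positivity)]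
    push_cast [P, Q]; ring
  calc (2 * (2 * π * n) + 3 * π + β) * (π - β) = (π - β) * (|P - Q| - (π - β)) := by
        rw [hPQ]; ring
    _ ≤ |P * Q| := mul_abs_sub_sub_le_abs_mul (sub_le_abs_two_pi_mul_int_add hξ _)
        (sub_le_abs_two_pi_mul_int_add hξ _)
    _ = |(2 * π * j + ξ₂)^2 - (2 * π * n + 2 * π)^2| := by congr 1; push_cast [P, Q]; ring

/-- Minimum estimate: for `0 < β < π`, `ξ₂ ∈ [π−β, π+β]` and `m = 2πn ∈ 2πℕ₀`,
`min_{m₂ ∈ 2πℤ} |(m₂ + ξ₂)² − (m + 2π)²| ≥ (2m + 3π + β)(π − β)`. -/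
theorem min_estimate (β ξ₂ : ℝ) (hβ : 0 < β) (hβπ : β < π)
    (hξ : ξ₂ ∈ Set.Icc (π - β) (π + β)) (n : ℕ) (m : ℝ) (hm : m = 2 * π * n) :
    ∀ j : ℤ, (2 * m + 3 * π + β) * (π - β) ≤ |(2 * π * j + ξ₂)^2 - (m + 2 * π)^2| :=
  min_estimate_general β ξ₂ hξ n m hm
end

section
/- Let δ, θ satisfy 0 < δ < min{π/4, π − θ} and 0 < θ < π. Then there exists τ₁ ∈ 2πℕ such that for all λ ≥ 0, all essentially bounded ε₀ with 0 < ε₀ ≤ E, all ξ₁ ∈ [−π, π] and all k₂ ∈ ℂ with Re k₂ ∈ [θ, π+δ]: for every m = (m₁, m₂) ∈ 2πℤ², |s(m, (ξ₁ + iτ₁, k₂))| ≥ (2(τ₁ − 2π) + 3π + π − θ)·θ, where s(m, k) is the symbol of the shifted Laplacian; in particular |s(m, (ξ₁+iτ₁, k₂))| ≥ 2λE for τ₁ large enough depending on λ, E, θ. -/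
/-!
Write `s = z² + w²` with `z = (m₁ + ξ₁) + iτ₁`, `w = m₂ + k₂` and factor it as
`(z + iw)(z - iw)`. The imaginary parts of the factors are `τ₁ ± Re w`. Since `τ₁ ∈ 2πℤ` and
`Re k₂ ∈ [θ, π + δ] ⊆ [θ, 2π - θ]`, both have absolute value at least `θ`, while their sum is
`2τ₁`; hence their product is at least `θ (2τ₁ - θ)`, which is the stated constant and exceeds
`2λE` once `τ₁` is large.
-/

open Real Complex

lemma le_abs_mul_int_add {p θ ξ : ℝ} (hp : 0 ≤ p) (hξ : ξ ∈ Set.Icc θ (p - θ))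
    (l : ℤ) :
    θ ≤ |p * l + ξ| := by
  obtain ⟨hθξ, hξp⟩ := hξ
  rcases le_or_gt 0 l with hl | hl
  · have : 0 ≤ p * l := mul_nonneg hp (by exact_mod_cast hl)
    exact hθξ.trans ((le_add_of_nonneg_left this).trans (le_abs_self _))
  · have hl' : (l : ℝ) ≤ -1 := by exact_mod_cast Int.le_sub_one_of_lt hl
    have : p * l ≤ -p := by nlinarith
    exact (le_neg.mpr (by linarith)).trans (neg_le_abs _)

lemma mul_sub_le_abs_mul_abs {θ a b : ℝ} (hθ : 0 ≤ θ) (ha : θ ≤ |a|) (hb : θ ≤ |b|) :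
    θ * (|a + b| - θ) ≤ |a| * |b| := by
  nlinarith [abs_add_le a b, mul_nonneg (sub_nonneg.mpr ha) (sub_nonneg.mpr hb)]

lemma Complex.abs_im_add_re_mul_abs_im_sub_re_le_norm_sq_add_sq (z w : ℂ) :
    |z.im + w.re| * |z.im - w.re| ≤ ‖z ^ 2 + w ^ 2‖ := by
  have hfactor : z ^ 2 + w ^ 2 = (z + I * w) * (z - I * w) := by
    linear_combination w ^ 2 * I_sq
  have him_add : (z + I * w).im = z.im + w.re := by simp
  have him_sub : (z - I * w).im = z.im - w.re := by simp
  rw [hfactor, norm_mul, ← him_add, ← him_sub]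
  exact mul_le_mul (abs_im_le_norm _) (abs_im_le_norm _) (abs_nonneg _) (norm_nonneg _)

lemma Complex.mul_two_mul_abs_im_sub_le_norm_sq_add_sq {p θ : ℝ} (hp : 0 ≤ p) (hθ : 0 ≤ θ)
    {z w : ℂ} {n l : ℤ} (hz : z.im = p * n) (hw : w.re - p * l ∈ Set.Icc θ (p - θ)) :
    θ * (2 * |z.im| - θ) ≤ ‖z ^ 2 + w ^ 2‖ := by
  have hplus : θ ≤ |z.im + w.re| := by
    convert le_abs_mul_int_add hp hw (n + l) using 2
    push_cast; rw [hz]; ring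
  have hminus : θ ≤ |z.im - w.re| := by
    convert le_abs_mul_int_add hp hw (l - n) using 1
    rw [← abs_neg]; push_cast; rw [hz]; ring_nf
  calc θ * (2 * |z.im| - θ) = θ * (|z.im + w.re + (z.im - w.re)| - θ) := by
        rw [show z.im + w.re + (z.im - w.re) = 2 * z.im by ring, abs_mul, abs_two]
    _ ≤ |z.im + w.re| * |z.im - w.re| := mul_sub_le_abs_mul_abs hθ hplus hminus
    _ ≤ ‖z ^ 2 + w ^ 2‖ := abs_im_add_re_mul_abs_im_sub_re_le_norm_sq_add_sq z w

theorem poles_free_line_general (δ θ : ℝ) (hθ : 0 < θ)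
    (hδm : δ < min (π / 4) (π - θ)) (lam E : ℝ) :
    ∃ N : ℕ, 1 ≤ N ∧ ∀ τ₁ : ℝ, τ₁ = 2 * π * N →
      (∀ ξ₁ ∈ Set.Icc (-π) π, ∀ k₂ : ℂ, k₂.re ∈ Set.Icc θ (π + δ) → ∀ m₁ m₂ : ℤ,
        (2 * (τ₁ - 2 * π) + 3 * π + (π - θ)) * θ ≤
          ‖((((2 * π * m₁ + ξ₁ : ℝ) : ℂ) + (τ₁ : ℝ) * Complex.I)^2
            + (((2 * π * m₂ : ℝ) : ℂ) + k₂)^2)‖) ∧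
      2 * lam * E ≤ (2 * (τ₁ - 2 * π) + 3 * π + (π - θ)) * θ := by
  have hδθ : δ < π - θ := hδm.trans_le (min_le_right _ _)
  obtain ⟨N, hN⟩ := exists_nat_ge ((2 * lam * E + θ ^ 2) / (4 * π * θ))
  refine ⟨N + 1, Nat.le_add_left 1 N, fun τ₁ hτ₁ => ?_⟩
  have hτ₁_nonneg : 0 ≤ τ₁ := by rw [hτ₁]; positivity
  rw [show (2 * (τ₁ - 2 * π) + 3 * π + (π - θ)) * θ = θ * (2 * |τ₁| - θ) by
    rw [abs_of_nonneg hτ₁_nonneg]; ring]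
  refine ⟨fun ξ₁ _ k₂ ⟨hk₂θ, hk₂δ⟩ m₁ m₂ => ?_, ?_⟩
  · have hw : (((2 * π * m₂ : ℝ) : ℂ) + k₂).re - 2 * π * m₂ ∈ Set.Icc θ (2 * π - θ) := by
      simp only [add_re, ofReal_re, add_sub_cancel_left]
      constructor <;> linarith
    simpa using mul_two_mul_abs_im_sub_le_norm_sq_add_sq (by positivity) hθ.le
      (z := ((2 * π * m₁ + ξ₁ : ℝ) : ℂ) + (τ₁ : ℝ) * I) (n := N + 1) (by simp [hτ₁]) hw
  · have hN' : 2 * lam * E + θ ^ 2 ≤ 4 * π * θ * N := by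
      rw [div_le_iff₀ (by positivity)] at hN; linarith
    rw [abs_of_nonneg hτ₁_nonneg, hτ₁]; push_cast; nlinarith [pi_pos]

/-- There exists `τ₁ ∈ 2πℕ` such that for all `ξ₁ ∈ [−π, π]`, all `k₂ ∈ ℂ` with
`Re k₂ ∈ [θ, π+δ]` and all `m ∈ 2πℤ²`,
`|s(m, (ξ₁ + iτ₁, k₂))| ≥ (2(τ₁ − 2π) + 3π + π − θ)·θ ≥ 2λE`. -/
theorem poles_free_line (δ θ : ℝ) (hθ : 0 < θ) (hθπ : θ < π) (hδ : 0 < δ)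
    (hδm : δ < min (π / 4) (π - θ)) (lam E : ℝ) (hlam : 0 ≤ lam) (hE : 0 < E)
    (ε₀ : (Fin 2 → ℝ) → ℝ) (hε₀pos : ∀ x, 0 < ε₀ x) (hε₀bd : ∀ x, ε₀ x ≤ E) :
    ∃ N : ℕ, 1 ≤ N ∧ ∀ τ₁ : ℝ, τ₁ = 2 * π * N →
      (∀ ξ₁ ∈ Set.Icc (-π) π, ∀ k₂ : ℂ, k₂.re ∈ Set.Icc θ (π + δ) → ∀ m₁ m₂ : ℤ,
        (2 * (τ₁ - 2 * π) + 3 * π + (π - θ)) * θ ≤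
          ‖((((2 * π * m₁ + ξ₁ : ℝ) : ℂ) + (τ₁ : ℝ) * Complex.I)^2
            + (((2 * π * m₂ : ℝ) : ℂ) + k₂)^2)‖) ∧
      2 * lam * E ≤ (2 * (τ₁ - 2 * π) + 3 * π + (π - θ)) * θ :=
  poles_free_line_general δ θ hθ hδm lam E
end

section
/- Let 0 < δ < π/4, τ₁ ∈ 2πℕ. There exist constants C = C(δ, τ₁) > 0 and M = M(δ, τ₁) > 0 such that for all ℓ ∈ 2πℕ with ℓ > M, all μ ∈ [−π, π], all ν ∈ 2πℤ with |ν| ≤ τ₁, all ξ₂ ∈ [π−δ, π+δ], and m₂ ∈ 2πℤ: |s((±ℓ, m₂), (μ+iν, ξ₂+i(π/2+ℓ)))|² ≥ 2(π/2+ℓ)²·[m₂ + (±ℓ+μ)ν/(π/2+ℓ) + ξ₂]² ≥ C·ℓ². -/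
/-!
The imaginary part of `s(m, ξ + iη)` is `2((m₁+ξ₁)η₁ + (m₂+ξ₂)η₂)`, which gives the first
inequality. For the second, write `σℓ = σ(π/2+ℓ) - σπ/2`: then
`m₂ + (σℓ+μ)ν/(π/2+ℓ) + ξ₂ = (m₂ + σν + ξ₂) + (μ - σπ/2)ν/(π/2+ℓ)`. The first summand is `ξ₂`
shifted by a multiple of `2π`, hence at distance at least `π - δ` from `0`, while the second is
`O(τ₁/ℓ)`, so at most `(π - δ)/2` once `ℓ` is large.
-/

open Real Complex

lemma two_mul_sq_le_norm_sq_add_sq (p q r t : ℝ) :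
    2 * (p * q + r * t) ^ 2 ≤ ‖((p : ℂ) + q * I) ^ 2 + ((r : ℂ) + t * I) ^ 2‖ ^ 2 := by
  set z := ((p : ℂ) + q * I) ^ 2 + ((r : ℂ) + t * I) ^ 2
  have him : z.im = 2 * (p * q + r * t) := by
    simp only [z, sq, add_im, mul_im, add_re, ofReal_re, ofReal_im, mul_re, I_re, I_im]
    ring
  have him_le : z.im ^ 2 ≤ ‖z‖ ^ 2 := by
    rw [← sq_abs]; exact pow_le_pow_left₀ (abs_nonneg _) (abs_im_le_norm z) 2
  rw [him] at him_le
  linarith [sq_nonneg (p * q + r * t)]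

lemma pi_sub_le_abs_two_pi_mul_int_add {δ ξ : ℝ} (hξ : ξ ∈ Set.Icc (π - δ) (π + δ)) (k : ℤ) :
    π - δ ≤ |2 * π * k + ξ| := by
  rcases le_or_gt 0 k with hk | hk
  · have hk' : (0 : ℝ) ≤ k := by exact_mod_cast hk
    nlinarith [le_abs_self (2 * π * k + ξ), pi_pos, hξ.1]
  · have hk' : (k : ℝ) ≤ -1 := by exact_mod_cast Int.le_sub_one_of_lt hk
    nlinarith [neg_abs_le (2 * π * k + ξ), pi_pos, hξ.2]

lemma abs_sub_mul_half_pi_mul_div_le {μ σ ν τ d ε : ℝ} (hμ : |μ| ≤ π) (hσ : |σ| = 1)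
    (hν : |ν| ≤ τ) (hd : 0 < d) (hτd : 3 * π * τ ≤ ε * d) :
    |(μ - σ * (π / 2)) * ν / d| ≤ ε / 2 := by
  have hcoef : |μ - σ * (π / 2)| ≤ 3 * π / 2 := by
    calc |μ - σ * (π / 2)| ≤ |μ| + |σ * (π / 2)| := abs_sub _ _
      _ = |μ| + π / 2 := by rw [abs_mul, hσ, one_mul, abs_of_pos (by positivity : (0 : ℝ) < π / 2)]
      _ ≤ 3 * π / 2 := by linarith
  rw [abs_div, abs_of_pos hd, div_le_iff₀ hd, abs_mul]
  nlinarith [mul_le_mul hcoef hν (abs_nonneg ν) (by positivity)]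

theorem case21_estimate_general (δ : ℝ) (hδ4 : δ < π / 4)
    (N₁ : ℕ) (hN₁ : 1 ≤ N₁) (τ₁ : ℝ) (hτ₁ : τ₁ = 2 * π * N₁) :
    ∃ C > 0, ∃ M > 0, ∀ n : ℕ, ∀ ℓ : ℝ, ℓ = 2 * π * n → M < ℓ →
      ∀ μ ∈ Set.Icc (-π) π, ∀ j : ℤ, ∀ ν : ℝ, ν = 2 * π * j → |ν| ≤ τ₁ →
        ∀ ξ₂ ∈ Set.Icc (π - δ) (π + δ), ∀ a : ℤ, ∀ m₂ : ℝ, m₂ = 2 * π * a →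
          ∀ σ : ℝ, (σ = 1 ∨ σ = -1) →
            2 * (π / 2 + ℓ)^2 * (m₂ + (σ * ℓ + μ) * ν / (π / 2 + ℓ) + ξ₂)^2 ≤
                (‖(((σ * ℓ + μ : ℝ) : ℂ) + (ν : ℝ) * Complex.I)^2
                  + (((m₂ + ξ₂ : ℝ) : ℂ) + ((π / 2 + ℓ : ℝ) : ℂ) * Complex.I)^2‖)^2 ∧
            C * ℓ^2 ≤ 2 * (π / 2 + ℓ)^2 * (m₂ + (σ * ℓ + μ) * ν / (π / 2 + ℓ) + ξ₂)^2 := by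
  have hπδ : 0 < π - δ := by linarith [pi_pos]
  have hτ₁_pos : 0 < τ₁ := by
    have : (1 : ℝ) ≤ N₁ := by exact_mod_cast hN₁
    rw [hτ₁]; positivity
  refine ⟨(π - δ) ^ 2 / 2, by positivity, 3 * π * τ₁ / (π - δ), by positivity, ?_⟩
  rintro n ℓ - hMℓ μ hμ j ν rfl hντ ξ₂ hξ₂ a m₂ rfl σ hσ
  obtain ⟨s, rfl, hs⟩ : ∃ s : ℤ, σ = s ∧ |(s : ℝ)| = 1 := by
    rcases hσ with rfl | rfl
    exacts [⟨1, by simp⟩, ⟨-1, by simp⟩]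
  have hℓ : 0 < ℓ := (div_pos (by positivity) hπδ).trans hMℓ
  have hd : 0 < π / 2 + ℓ := by positivity
  have hdecomp : 2 * π * a + (s * ℓ + μ) * (2 * π * j) / (π / 2 + ℓ) + ξ₂
      = (2 * π * ↑(a + s * j) + ξ₂) + (μ - s * (π / 2)) * (2 * π * j) / (π / 2 + ℓ) := by
    push_cast; field_simp; ring
  have hX : (π - δ) / 2 ≤ |2 * π * a + (s * ℓ + μ) * (2 * π * j) / (π / 2 + ℓ) + ξ₂| := by
    have hshift := pi_sub_le_abs_two_pi_mul_int_add hξ₂ (a + s * j)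
    have herr := abs_sub_mul_half_pi_mul_div_le (abs_le.mpr hμ) hs hντ hd
      (by nlinarith [(div_lt_iff₀ hπδ).mp hMℓ, pi_pos] : 3 * π * τ₁ ≤ (π - δ) * (π / 2 + ℓ))
    rw [hdecomp]
    linarith [abs_sub_abs_le_abs_add (2 * π * ↑(a + s * j) + ξ₂)
      ((μ - s * (π / 2)) * (2 * π * j) / (π / 2 + ℓ))]
  constructor
  · calc _ = 2 * ((s * ℓ + μ) * (2 * π * j) + (2 * π * a + ξ₂) * (π / 2 + ℓ)) ^ 2 := by
          field_simp; ring
      _ ≤ _ := two_mul_sq_le_norm_sq_add_sq _ _ _ _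
  · have hsq := pow_le_pow_left₀ (by positivity) hX 2
    rw [sq_abs] at hsq
    calc (π - δ) ^ 2 / 2 * ℓ ^ 2 = 2 * ℓ ^ 2 * ((π - δ) / 2) ^ 2 := by ring
      _ ≤ 2 * (π / 2 + ℓ) ^ 2 * ((π - δ) / 2) ^ 2 := by gcongr; linarith [pi_pos]
      _ ≤ _ := by gcongr

/-- Case 2.1 estimate: there exist `C, M > 0` such that for all `ℓ ∈ 2πℕ` with `ℓ > M`,
`μ ∈ [−π, π]`, `ν ∈ 2πℤ` with `|ν| ≤ τ₁`, `ξ₂ ∈ [π−δ, π+δ]`, `m₂ ∈ 2πℤ` and sign `σ`: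
`|s((σℓ, m₂), (μ+iν, ξ₂+i(π/2+ℓ)))|² ≥ 2(π/2+ℓ)²[m₂ + (σℓ+μ)ν/(π/2+ℓ) + ξ₂]² ≥ Cℓ²`. -/
theorem case21_estimate (δ : ℝ) (hδ : 0 < δ) (hδ4 : δ < π / 4)
    (N₁ : ℕ) (hN₁ : 1 ≤ N₁) (τ₁ : ℝ) (hτ₁ : τ₁ = 2 * π * N₁) :
    ∃ C > 0, ∃ M > 0, ∀ n : ℕ, ∀ ℓ : ℝ, ℓ = 2 * π * n → M < ℓ →
      ∀ μ ∈ Set.Icc (-π) π, ∀ j : ℤ, ∀ ν : ℝ, ν = 2 * π * j → |ν| ≤ τ₁ →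
        ∀ ξ₂ ∈ Set.Icc (π - δ) (π + δ), ∀ a : ℤ, ∀ m₂ : ℝ, m₂ = 2 * π * a →
          ∀ σ : ℝ, (σ = 1 ∨ σ = -1) →
            2 * (π / 2 + ℓ)^2 * (m₂ + (σ * ℓ + μ) * ν / (π / 2 + ℓ) + ξ₂)^2 ≤
                (‖(((σ * ℓ + μ : ℝ) : ℂ) + (ν : ℝ) * Complex.I)^2
                  + (((m₂ + ξ₂ : ℝ) : ℂ) + ((π / 2 + ℓ : ℝ) : ℂ) * Complex.I)^2‖)^2 ∧
            C * ℓ^2 ≤ 2 * (π / 2 + ℓ)^2 * (m₂ + (σ * ℓ + μ) * ν / (π / 2 + ℓ) + ξ₂)^2 :=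
  case21_estimate_general δ hδ4 N₁ hN₁ τ₁ hτ₁
end
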